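/- (Correctness of the Games-Chan recursion.) Let n ≥ 1 and let s be a binary sequence with period dividing 2^n. Let t be the binary sequence t := (E^{2^{n−1}} + 1)s, i.e., t(i) = s(i) + s(i + 2^{n−1}) for all i. If t is not the all-zero sequence, then t has period dividing 2^{n−1} and c(s) = 2^{n−1} + c(t); if t is the all-zero sequence, then s itself has period dividing 2^{n−1}. -/
import Mathlib


open Polynomial

noncomputable def polyApp (f : Polynomial (ZMod 2)) (s : ℕ → ZMod 2) : ℕ → ZMod 2 :=
  fun i => f.sum fun j c => c * s (i + j)

/-- The linear complexity of a periodic binary sequence: the least degree of a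
nonzero polynomial generating it. -/
noncomputable def linComplexity (s : ℕ → ZMod 2) : ℕ :=
  sInf {d | ∃ f : Polynomial (ZMod 2), f ≠ 0 ∧ polyApp f s = 0 ∧ f.natDegree = d}

noncomputable def Esh : Module.End (ZMod 2) (ℕ → ZMod 2) where
  toFun s := fun i => s (i + 1)
  map_add' _ _ := rfl
  map_smul' _ _ := rfl

lemma Esh_pow (k : ℕ) (s : ℕ → ZMod 2) : (Esh ^ k) s = fun i => s (i + k) := by
  induction k with
  | zero => simp
  | succ k ih =>
    rw [pow_succ', Module.End.mul_apply, ih]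
    funext i
    show s (i + 1 + k) = s (i + (k + 1))
    rw [add_assoc, add_comm 1 k]

lemma polyApp_eq (f : Polynomial (ZMod 2)) (s : ℕ → ZMod 2) :
    polyApp f s = Polynomial.aeval Esh f s := by
  funext i
  rw [Polynomial.aeval_def, Polynomial.eval₂_eq_sum, polyApp]
  simp only [Polynomial.sum, LinearMap.sum_apply, Finset.sum_apply]
  refine Finset.sum_congr rfl fun j _ => ?_
  simp [Module.End.mul_apply, Module.algebraMap_end_apply, Esh_pow]

lemma polyApp_mul (f g : Polynomial (ZMod 2)) (s : ℕ → ZMod 2) :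
    polyApp (f * g) s = polyApp f (polyApp g s) := by
  rw [polyApp_eq, polyApp_eq, polyApp_eq, map_mul, Module.End.mul_apply]

lemma polyApp_add (f g : Polynomial (ZMod 2)) (s : ℕ → ZMod 2) :
    polyApp (f + g) s = polyApp f s + polyApp g s := by
  rw [polyApp_eq, polyApp_eq, polyApp_eq, map_add, LinearMap.add_apply]

lemma polyApp_one (s : ℕ → ZMod 2) : polyApp 1 s = s := by
  rw [polyApp_eq, map_one]; rfl

lemma polyApp_zero (f : Polynomial (ZMod 2)) : polyApp f (0 : ℕ → ZMod 2) = 0 := by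
  rw [polyApp_eq]; exact map_zero _

lemma polyApp_X_pow (k : ℕ) (s : ℕ → ZMod 2) :
    polyApp (X ^ k) s = fun i => s (i + k) := by
  rw [polyApp_eq, map_pow, aeval_X, Esh_pow]

lemma polyApp_X_pow_add_one (k : ℕ) (s : ℕ → ZMod 2) :
    polyApp (X ^ k + 1) s = fun i => s (i + k) + s i := by
  rw [polyApp_add, polyApp_one, polyApp_X_pow]; rfl

lemma XaddOne : (X + 1 : Polynomial (ZMod 2)) = X - C 1 := by
  rw [sub_eq_add_neg, CharTwo.neg_eq, map_one]

lemma linComplexity_eq_sInf (u : ℕ → ZMod 2) (K : ℕ)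
    (hK : polyApp ((X + 1) ^ K) u = 0) :
    linComplexity u = sInf {k | polyApp ((X + 1) ^ k) u = 0} := by
  rw [linComplexity]
  set P : Polynomial (ZMod 2) := X + 1 with hPdef
  have hPmonic : P.Monic := by rw [hPdef, XaddOne]; exact monic_X_sub_C 1
  have hPdeg : P.natDegree = 1 := by
    rw [hPdef, show (1 : Polynomial (ZMod 2)) = C 1 from (map_one C).symm]
    exact natDegree_X_add_C 1
  have hAne : {k | polyApp (P ^ k) u = 0}.Nonempty := ⟨K, hK⟩
  apply le_antisymm
  · apply Nat.sInf_le
    refine ⟨P ^ sInf {k | polyApp (P ^ k) u = 0}, (hPmonic.pow _).ne_zero,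
      Nat.sInf_mem hAne, ?_⟩
    rw [hPmonic.natDegree_pow, hPdeg, mul_one]
  · have hDne : {d | ∃ f : Polynomial (ZMod 2), f ≠ 0 ∧ polyApp f u = 0 ∧ f.natDegree = d}.Nonempty :=
      ⟨K, P ^ K, (hPmonic.pow _).ne_zero, hK, by rw [hPmonic.natDegree_pow, hPdeg, mul_one]⟩
    apply le_csInf hDne
    rintro d ⟨f, hf, hfu, rfl⟩
    set a := f.rootMultiplicity 1 with ha
    obtain ⟨g, hfg, hgnd⟩ := f.exists_eq_pow_rootMultiplicity_mul_and_not_dvd hf 1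
    have haled : a ≤ f.natDegree := by
      refine le_trans ?_ (natDegree_le_of_dvd ⟨g, hfg⟩ hf)
      rw [(monic_X_sub_C (1 : ZMod 2)).natDegree_pow, natDegree_X_sub_C, mul_one]
    refine le_trans (Nat.sInf_le ?_) haled
    -- show polyApp (P ^ a) u = 0
    have hcop : IsCoprime g (P ^ K) := by
      rw [hPdef, XaddOne]
      exact (((irreducible_X_sub_C (1 : ZMod 2)).coprime_iff_not_dvd.2 hgnd).symm).pow_right
    obtain ⟨p, q, hpq⟩ := hcop
    have h1 : polyApp g (polyApp (P ^ a) u) = 0 := by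
      rw [← polyApp_mul, show g * P ^ a = f by rw [hfg, hPdef, XaddOne, mul_comm], hfu]
    have h2 : polyApp (P ^ K) (polyApp (P ^ a) u) = 0 := by
      rw [← polyApp_mul, mul_comm, polyApp_mul, hK, polyApp_zero]
    show polyApp (P ^ a) u = 0
    calc polyApp (P ^ a) u = polyApp 1 (polyApp (P ^ a) u) := (polyApp_one _).symm
      _ = 0 := by
        rw [← hpq, polyApp_add, polyApp_mul, polyApp_mul, h1, h2,
          polyApp_zero, polyApp_zero, add_zero]

theorem games_chan_recursion (n : ℕ) (hn : 1 ≤ n)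
    (s : ℕ → ZMod 2) (hper : ∀ i, s (i + 2 ^ n) = s i)
    (t : ℕ → ZMod 2) (ht : ∀ i, t i = s i + s (i + 2 ^ (n - 1))) :
    (t ≠ 0 → (∀ i, t (i + 2 ^ (n - 1)) = t i) ∧
      linComplexity s = 2 ^ (n - 1) + linComplexity t) ∧
    (t = 0 → ∀ i, s (i + 2 ^ (n - 1)) = s i) := by
  have hmm : 2 ^ (n - 1) + 2 ^ (n - 1) = 2 ^ n := by
    rw [← two_mul, ← pow_succ']
    congr 1
    omega
  set m := 2 ^ (n - 1) with hm
  set P : Polynomial (ZMod 2) := X + 1 with hP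
  have hPm : P ^ m = X ^ m + 1 := by
    rw [hP, hm, add_pow_char_pow, one_pow]
  have ht' : t = polyApp (P ^ m) s := by
    rw [hPm, polyApp_X_pow_add_one]
    funext i
    rw [ht i, add_comm]
  have hs0 : polyApp (P ^ (2 ^ n)) s = 0 := by
    rw [hP, add_pow_char_pow, one_pow, polyApp_X_pow_add_one]
    funext i
    rw [hper i, CharTwo.add_self_eq_zero]
    rfl
  constructor
  · intro htne
    have hto : ∀ i, t (i + m) = t i := by
      intro i
      rw [ht, ht]
      have h1 : i + m + m = i + 2 ^ n := by omega
      rw [h1, hper, add_comm]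
    refine ⟨hto, ?_⟩
    have hSne : {k | polyApp (P ^ k) s = 0}.Nonempty := ⟨2 ^ n, hs0⟩
    set c := sInf {k | polyApp (P ^ k) s = 0} with hc
    have hcS : polyApp (P ^ c) s = 0 := Nat.sInf_mem hSne
    have hmc : m < c := by
      by_contra hle
      push_neg at hle
      apply htne
      rw [ht', show m = (m - c) + c by omega, pow_add, polyApp_mul, hcS, polyApp_zero]
    have hT1 : polyApp (P ^ (c - m)) t = 0 := by
      rw [ht', ← polyApp_mul, ← pow_add, show c - m + m = c by omega, hcS]
    have hct : linComplexity t = c - m := by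
      rw [linComplexity_eq_sInf t (c - m) hT1]
      apply le_antisymm (Nat.sInf_le hT1)
      apply le_csInf ⟨c - m, hT1⟩
      intro k hk
      have hk' : polyApp (P ^ k) t = 0 := hk
      have hkm : polyApp (P ^ (k + m)) s = 0 := by
        rw [pow_add, polyApp_mul, ← ht', hk']
      have hle : c ≤ k + m := Nat.sInf_le hkm
      omega
    have hcs : linComplexity s = c := linComplexity_eq_sInf s (2 ^ n) hs0
    rw [hcs, hct]
    omega
  · intro ht0 i
    have h : (0 : ZMod 2) = s i + s (i + m) := by
      rw [← ht i, ht0]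
      rfl
    have h2 := eq_neg_of_add_eq_zero_right h.symm
    rw [CharTwo.neg_eq] at h2
    exact h2
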